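/- Consider the simplified RDN system τ·dR_i/dt = −R_i + (β·R_i + I_i)/(η + G) for i = 1,…,N and τ·dG/dt = −G + ∑_{j=1}^N R_j, with τ > 0, η > 0, β > 0 and inputs I_i > 0 for all i. Let (R*, G*) be its unique equilibrium with G* > 0, given by G* = ((β − η) + √((η − β)² + 4T))/2 and R_i* = 2I_i/((η − β) + √((η − β)² + 4T)) with T = ∑_{j=1}^N I_j. Then every eigenvalue of the Jacobian matrix of the vector field at (R*, G*) has strictly negative real part. -/

import Mathlib

/-!
At a point with `D = η + G ≠ 0` the Jacobian is an arrowhead matrix: the scalar block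
`a = (β / D - 1) / τ` on the `R`-coordinates, the column `c_i = -(β R_i + I_i) / (D² τ)`, the row
`1 / τ` and the corner `-1 / τ`. An eigenvector with vanishing `G`-component has eigenvalue `a`;
otherwise eliminating the `R`-components gives `(μ - a) (μ + 1 / τ) = (1 / τ) ∑ c_i`, a monic
quadratic with positive coefficients as soon as `a < 0` and all `c_i ≤ 0`, whose roots therefore
lie in the open left half-plane. At the equilibrium `D - β = (η - β + √((η - β)² + 4 ∑ I_j)) / 2`
is positive and `R_i > 0`, which gives both signs.
-/

/-- The vector field of the simplified RDN system with inputs on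
`(R_1, …, R_N, G)`: `dR_i/dt = (-R_i + (β R_i + I_i)/(η + G))/τ`,
`dG/dt = (-G + ∑_j R_j)/τ`. -/
noncomputable def rdnFieldI (N : ℕ) (τ β η : ℝ) (I : Fin N → ℝ)
    (x : (Fin N ⊕ Unit) → ℝ) : (Fin N ⊕ Unit) → ℝ :=
  fun i => match i with
  | Sum.inl i =>
      (-x (Sum.inl i) + (β * x (Sum.inl i) + I i) / (η + x (Sum.inr ()))) / τ
  | Sum.inr _ => (-x (Sum.inr ()) + ∑ j, x (Sum.inl j)) / τ

/-- The Jacobian matrix of `F` at `p`: the matrix of partial derivatives of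
the components of `F` with respect to the coordinates. -/
noncomputable def jacobian {n : Type*} [Fintype n] [DecidableEq n]
    (F : (n → ℝ) → n → ℝ) (p : n → ℝ) : Matrix n n ℝ :=
  Matrix.of fun i j => fderiv ℝ (fun x => F x i) p (Pi.single j 1)

/-- `μ` is an eigenvalue of the complex matrix `M`. -/
def IsEigenvalue {n : Type*} [Fintype n] [DecidableEq n]
    (M : Matrix n n ℂ) (μ : ℂ) : Prop :=
  ∃ x : n → ℂ, x ≠ 0 ∧ M.mulVec x = μ • x

theorem Complex.re_lt_zero_of_sq_add_mul_add_eq_zero {p q : ℝ} (hp : 0 < p) (hq : 0 < q)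
    {μ : ℂ} (h : μ ^ 2 + p * μ + q = 0) : μ.re < 0 := by
  have hre := congrArg Complex.re h
  have him := congrArg Complex.im h
  simp only [pow_two, Complex.add_re, Complex.mul_re, Complex.ofReal_re, Complex.ofReal_im,
    Complex.add_im, Complex.mul_im, Complex.zero_re, Complex.zero_im] at hre him
  have him' : μ.im * (2 * μ.re + p) = 0 := by linear_combination him
  rcases mul_eq_zero.mp him' with hreal | hre_eq
  · rw [hreal] at hre
    nlinarith
  · linarith

open Matrix in
theorem re_lt_zero_of_isEigenvalue_fromBlocks {ι : Type*} [Fintype ι] [DecidableEq ι]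
    {a b d : ℝ} {c : ι → ℝ} (ha : Nonempty ι → a < 0) (hd : d < 0) (hbc : ∀ i, b * c i ≤ 0)
    {μ : ℂ} (hμ : IsEigenvalue
      ((fromBlocks (diagonal fun _ => a) (of fun i (_ : Unit) => c i) (of fun _ _ => b)
        (of fun _ _ => d)).map Complex.ofReal) μ) :
    μ.re < 0 := by
  obtain ⟨v, hv0, hv⟩ := hμ
  set y := v (Sum.inr ())
  rw [fromBlocks_map, fromBlocks_mulVec] at hv
  have hx (i : ι) : (μ - a) * v (Sum.inl i) = c i * y := by
    have := congrFun hv (Sum.inl i)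
    simp only [diagonal_map, Complex.ofReal_zero, diagonal_const_mulVec, Sum.elim_inl,
      Pi.add_apply, Pi.smul_apply, Function.comp_apply, mulVec, dotProduct,
      Finset.univ_unique, PUnit.default_eq_unit, map_apply, of_apply, Finset.sum_singleton,
      smul_eq_mul] at this
    linear_combination -this
  have hy : (μ - d) * y = b * ∑ i, v (Sum.inl i) := by
    have := congrFun hv (Sum.inr ())
    simp only [Sum.elim_inr, Pi.add_apply, mulVec, dotProduct, map_apply, of_apply,
      Function.comp_apply, ← Finset.mul_sum, Finset.univ_unique, PUnit.default_eq_unit,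
      Finset.sum_singleton, Pi.smul_apply, smul_eq_mul] at this
    linear_combination -this
  by_cases hy0 : y = 0
  · obtain ⟨i, hi⟩ : ∃ i, v (Sum.inl i) ≠ 0 := by
      by_contra! h
      exact hv0 (funext fun | Sum.inl i => h i | Sum.inr () => hy0)
    have hμa : μ = a := by
      have := hx i
      rw [hy0, mul_zero, mul_eq_zero] at this
      exact sub_eq_zero.mp (this.resolve_right hi)
    simpa [hμa] using ha ⟨i⟩
  rcases isEmpty_or_nonempty ι with hι | hι
  · have hμd : μ = d := by
      rw [Finset.univ_eq_empty, Finset.sum_empty, mul_zero, mul_eq_zero] at hy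
      exact sub_eq_zero.mp (hy.resolve_right hy0)
    simpa [hμd] using hd
  have hchar : (μ - a) * (μ - d) = ((b * ∑ i, c i : ℝ) : ℂ) := by
    apply mul_right_cancel₀ hy0
    calc (μ - a) * (μ - d) * y = b * ∑ i, (μ - a) * v (Sum.inl i) := by
          rw [← Finset.mul_sum, mul_assoc, hy]; ring
      _ = ((b * ∑ i, c i : ℝ) : ℂ) * y := by push_cast; simp only [hx, ← Finset.sum_mul]; ring
  have hbc_sum : b * ∑ i, c i ≤ 0 := by
    rw [Finset.mul_sum]
    exact Finset.sum_nonpos fun i _ => hbc i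
  apply Complex.re_lt_zero_of_sq_add_mul_add_eq_zero (p := -(a + d)) (q := a * d - b * ∑ i, c i)
  · linarith [ha hι]
  · nlinarith [ha hι]
  · push_cast at hchar ⊢
    linear_combination hchar

open Matrix in
theorem jacobian_rdnFieldI (N : ℕ) (τ β η : ℝ) (I : Fin N → ℝ) (p : Fin N ⊕ Unit → ℝ)
    (hD : η + p (Sum.inr ()) ≠ 0) :
    jacobian (rdnFieldI N τ β η I) p =
      fromBlocks (diagonal fun _ => (β / (η + p (Sum.inr ())) - 1) / τ)
        (of fun i _ => -(β * p (Sum.inl i) + I i) / ((η + p (Sum.inr ())) ^ 2 * τ))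
        (of fun _ _ => 1 / τ) (of fun _ _ => -1 / τ) := by
  have hcoord (k : Fin N ⊕ Unit) :=
    hasFDerivAt_apply (𝕜 := ℝ) (F' := fun _ : Fin N ⊕ Unit => ℝ) k p
  have hR (i : Fin N) : fderiv ℝ (fun x => rdnFieldI N τ β η I x (.inl i)) p = _ :=
    ((hcoord (.inl i)).neg.add ((((hcoord (.inl i)).const_mul β).add_const (I i)).mul
      ((hasFDerivAt_inv hD).comp p ((hcoord (.inr ())).const_add η)))).mul_const τ⁻¹ |>.fderiv
  have hG : fderiv ℝ (fun x => rdnFieldI N τ β η I x (.inr ())) p = _ :=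
    ((hcoord (.inr ())).neg.add
      (HasFDerivAt.fun_sum fun j (_ : j ∈ Finset.univ) => hcoord (.inl j))).mul_const τ⁻¹ |>.fderiv
  ext (i | _) (j | _) <;> simp [jacobian, hR, hG, Pi.single_apply, diagonal_apply]
  · split_ifs <;> ring
  · rw [div_eq_mul_inv, mul_inv]
    ring
  · ring

theorem Real.abs_lt_sqrt_sq_add {x y : ℝ} (hy : 0 < y) : |x| < √(x ^ 2 + y) :=
  (Real.lt_sqrt (abs_nonneg x)).mpr (by rw [sq_abs]; linarith)

theorem rdn_equilibrium_is_attractor_general (N : ℕ) (τ β η : ℝ) (I : Fin N → ℝ)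
    (hτ : 0 < τ) (hβ : 0 < β) (hI : ∀ i, 0 < I i)
    (p : (Fin N ⊕ Unit) → ℝ)
    (hG : p (Sum.inr ()) =
      ((β - η) + Real.sqrt ((η - β) ^ 2 + 4 * ∑ j, I j)) / 2)
    (hR : ∀ i, p (Sum.inl i) =
      2 * I i / ((η - β) + Real.sqrt ((η - β) ^ 2 + 4 * ∑ j, I j))) :
    ∀ μ : ℂ,
      IsEigenvalue ((jacobian (rdnFieldI N τ β η I) p).map Complex.ofReal) μ →
        μ.re < 0 := by
  intro μ hμ
  set s := √((η - β) ^ 2 + 4 * ∑ j, I j)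
  have hs : |η - β| ≤ s :=
    Real.abs_le_sqrt (by linarith [Finset.sum_nonneg fun j (_ : j ∈ Finset.univ) => (hI j).le])
  have hs_lt (i : Fin N) : |η - β| < s :=
    Real.abs_lt_sqrt_sq_add <| mul_pos four_pos <|
      Finset.sum_pos (fun j _ => hI j) ⟨i, Finset.mem_univ i⟩
  have hD : 0 < η + p (Sum.inr ()) := by rw [hG]; linarith [abs_le.mp hs]
  rw [jacobian_rdnFieldI N τ β η I p hD.ne'] at hμ
  refine re_lt_zero_of_isEigenvalue_fromBlocks ?_ (div_neg_of_neg_of_pos neg_one_lt_zero hτ) ?_ hμ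
  · rintro ⟨i⟩
    have hβD : β < η + p (Sum.inr ()) := by rw [hG]; linarith [abs_lt.mp (hs_lt i)]
    exact div_neg_of_neg_of_pos (by rw [sub_neg, div_lt_one hD]; exact hβD) hτ
  · intro i
    have hRi : 0 < p (Sum.inl i) := by
      rw [hR i]; exact div_pos (by linarith [hI i]) (by linarith [abs_lt.mp (hs_lt i)])
    have hnum : 0 < β * p (Sum.inl i) + I i := add_pos (mul_pos hβ hRi) (hI i)
    exact mul_nonpos_of_nonneg_of_nonpos (by positivity)
      (div_nonpos_of_nonpos_of_nonneg (by linarith) (by positivity))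

/-- At the unique positive-`G` equilibrium of the simplified RDN system with
positive inputs, every eigenvalue of the Jacobian has strictly negative real
part. -/
theorem rdn_equilibrium_is_attractor (N : ℕ) (τ β η : ℝ) (I : Fin N → ℝ)
    (hτ : 0 < τ) (hη : 0 < η) (hβ : 0 < β) (hI : ∀ i, 0 < I i)
    (p : (Fin N ⊕ Unit) → ℝ)
    (hG : p (Sum.inr ()) =
      ((β - η) + Real.sqrt ((η - β) ^ 2 + 4 * ∑ j, I j)) / 2)
    (hR : ∀ i, p (Sum.inl i) =
      2 * I i / ((η - β) + Real.sqrt ((η - β) ^ 2 + 4 * ∑ j, I j))) :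
    ∀ μ : ℂ,
      IsEigenvalue ((jacobian (rdnFieldI N τ β η I) p).map Complex.ofReal) μ →
        μ.re < 0 :=
  rdn_equilibrium_is_attractor_general N τ β η I hτ hβ hI p hG hR
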